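/- For every point p = (t_1,t_2,t_3,x) ∈ ℝ⁴, the vector n(p) = (-x(t_3 + 3x²), -x²(t_3 + 3x²), x(t_1 + 2x t_2), t_3 + 3x², -(t_1 + 2x t_2)) ∈ ℝ⁵ is orthogonal to all four columns of the Jacobian matrix of σ_2 at p, and n(p) ≠ 0 whenever p is a regular point of σ_2. -/

import Mathlib

/-- The `5 × 4` Jacobian matrix of the cusp normal form
`σ₂(t₁,t₂,t₃,x) = (t₁,t₂,t₃, t₁x + t₂x², t₃x + x³)` at the point `(t₁,t₂,t₃,x)`. -/
noncomputable def sigma2Jacobi (t₁ t₂ t₃ x : ℝ) : Matrix (Fin 5) (Fin 4) ℝ :=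
  !![1, 0, 0, 0;
     0, 1, 0, 0;
     0, 0, 1, 0;
     x, x ^ 2, 0, t₁ + 2 * x * t₂;
     0, 0, x, t₃ + 3 * x ^ 2]

/-- The normal vector `n(p)` of `σ₂` at `p = (t₁,t₂,t₃,x)`. -/
noncomputable def sigma2Normal (t₁ t₂ t₃ x : ℝ) : Fin 5 → ℝ :=
  ![-x * (t₃ + 3 * x ^ 2), -x ^ 2 * (t₃ + 3 * x ^ 2), x * (t₁ + 2 * x * t₂),
    t₃ + 3 * x ^ 2, -(t₁ + 2 * x * t₂)]

theorem sigma2Normal_vecMul_sigma2Jacobi (t₁ t₂ t₃ x : ℝ) :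
    Matrix.vecMul (sigma2Normal t₁ t₂ t₃ x) (sigma2Jacobi t₁ t₂ t₃ x) = 0 := by
  ext j
  fin_cases j <;>
    simp only [sigma2Normal, sigma2Jacobi, Matrix.vecMul, dotProduct, Fin.sum_univ_five,
      Fin.zero_eta, Fin.mk_one, Fin.reduceFinMk, Matrix.of_apply, Matrix.cons_val',
      Matrix.cons_val, Matrix.cons_val_zero, Matrix.cons_val_one, Matrix.cons_val_fin_one,
      Pi.zero_apply] <;>
    ring

theorem sigma2Normal_eq_zero_iff (t₁ t₂ t₃ x : ℝ) :
    sigma2Normal t₁ t₂ t₃ x = 0 ↔ t₁ + 2 * x * t₂ = 0 ∧ t₃ + 3 * x ^ 2 = 0 := by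
  constructor
  · intro hn
    have h₃ := congrFun hn 3
    have h₄ := congrFun hn 4
    simp only [sigma2Normal, Matrix.cons_val, Pi.zero_apply, neg_eq_zero] at h₃ h₄
    exact ⟨h₄, h₃⟩
  · rintro ⟨ha, hb⟩
    simp [sigma2Normal, ha, hb]

/-- `n(p)` is orthogonal to all four columns of the Jacobian of `σ₂` at `p`, and
`n(p) ≠ 0` whenever `p` is a regular point of `σ₂`. -/
theorem sigma2Normal_orthogonal (t₁ t₂ t₃ x : ℝ) :
    (∀ j : Fin 4, ∑ i : Fin 5, sigma2Normal t₁ t₂ t₃ x i * sigma2Jacobi t₁ t₂ t₃ x i j = 0) ∧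
    ((t₁ + 2 * x * t₂, t₃ + 3 * x ^ 2) ≠ ((0 : ℝ), (0 : ℝ)) →
      sigma2Normal t₁ t₂ t₃ x ≠ 0) := by
  refine ⟨fun j => congrFun (sigma2Normal_vecMul_sigma2Jacobi t₁ t₂ t₃ x) j, ?_⟩
  intro hregular hn
  rw [sigma2Normal_eq_zero_iff] at hn
  exact hregular (Prod.ext hn.1 hn.2)
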